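/- arXiv:2305.00178 — 5 statements merged into one kernel-verified Lean document; each statement's English description precedes it below -/
import Mathlib

section
/- Let G be a (linearly) ordered abelian group, β₁, …, β_m ∈ G, λ a limit ordinal, and (γ_s)_{s<λ} a well-ordered, monotone increasing family of elements of G without a last element. Let t₁, …, t_m be distinct integers. Then there exist an ordinal ν < λ and an index r with 1 ≤ r ≤ m such that β_i + t_iγ_s > β_r + t_rγ_s for all i ≠ r and all s with ν < s < λ. -/
/-!
For `t i < t j` the line `β j + t j • γ s` stays strictly above `β i + t i • γ s` once it has
caught up with it, so each pair of lines is eventually strictly ordered along `𝓝[<] lam`, a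
nontrivial filter because `lam` is a limit. At a point `s₀` where all these finitely many eventual
comparisons already hold, the index `r` minimizing `β r + t r • γ s₀` must be eventually below
every other line.
-/

open Filter Set Topology

theorem add_zsmul_lt_add_zsmul_of_le {G : Type*} [AddCommGroup G] [LinearOrder G]
    [IsOrderedAddMonoid G] {b b' x y : G} {t t' : ℤ} (ht : t < t') (hxy : x < y)
    (h : b + t • x ≤ b' + t' • x) : b + t • y < b' + t' • y :=
  calc b + t • y = (b + t • x) + t • (y - x) := by rw [zsmul_sub]; abel
    _ ≤ (b' + t' • x) + t • (y - x) := by gcongr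
    _ < (b' + t' • x) + t' • (y - x) := by gcongr
    _ = b' + t' • y := by rw [zsmul_sub]; abel

theorem eventually_lt_or_eventually_lt_nhdsLT {α β : Type*} [LinearOrder α] [TopologicalSpace α]
    [ClosedIicTopology α] [LinearOrder β] {b : α} {f g : α → β}
    (h : ∀ x y, x < y → y < b → f x ≤ g x → f y < g y) :
    (∀ᶠ y in 𝓝[<] b, f y < g y) ∨ ∀ᶠ y in 𝓝[<] b, g y < f y := by
  by_cases hcross : ∃ x < b, f x ≤ g x
  · obtain ⟨x, hxb, hfg⟩ := hcross
    exact .inl <| mem_of_superset (Ioo_mem_nhdsLT hxb) fun y hy => h x y hy.1 hy.2 hfg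
  · push Not at hcross
    exact .inr <| eventually_nhdsWithin_of_forall hcross

theorem exists_eventually_forall_ne_lt {ι α β : Type*} [Finite ι] [Nonempty ι] [LinearOrder β]
    {l : Filter α} [l.NeBot] {f : ι → α → β}
    (h : ∀ i j, i ≠ j → (∀ᶠ x in l, f i x < f j x) ∨ ∀ᶠ x in l, f j x < f i x) :
    ∃ r, ∀ᶠ x in l, ∀ i, i ≠ r → f r x < f i x := by
  have hgeneric : ∀ᶠ x in l, ∀ i j, (∀ᶠ y in l, f i y < f j y) → f i x < f j x := by
    refine eventually_all.2 fun i => eventually_all.2 fun j => ?_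
    by_cases hij : ∀ᶠ y in l, f i y < f j y
    · exact hij.mono fun x hx _ => hx
    · exact univ_mem' fun x hx => absurd hx hij
  obtain ⟨x₀, hx₀⟩ := hgeneric.exists
  obtain ⟨r, hr⟩ := Finite.exists_min (f · x₀)
  refine ⟨r, eventually_all.2 fun i => ?_⟩
  by_cases hir : i = r
  · exact univ_mem' fun x hx => absurd hir hx
  rcases h i r hir with hlt | hlt
  · exact absurd (hx₀ i r hlt) (not_lt.2 (hr i))
  · exact hlt.mono fun x hx _ => hx

theorem ostrowski_minimal_index_general {G : Type*} [AddCommGroup G] [LinearOrder G] [IsOrderedAddMonoid G]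
    (m : ℕ) (hm : 0 < m) (β : Fin m → G)
    (lam : Ordinal.{0}) (hlam : Order.IsSuccLimit lam)
    (γ : Ordinal.{0} → G)
    (hmono : ∀ s s' : Ordinal, s < s' → s' < lam → γ s < γ s')
    (t : Fin m → ℤ) (ht : Function.Injective t) :
    ∃ ν < lam, ∃ r : Fin m, ∀ i : Fin m, i ≠ r → ∀ s : Ordinal, ν < s → s < lam →
      β r + t r • γ s < β i + t i • γ s := by
  have : Nonempty (Fin m) := ⟨⟨0, hm⟩⟩
  have : (𝓝[<] lam).NeBot := hlam.isSuccPrelimit.isLUB_Iio.nhdsWithin_neBot ⟨0, hlam.pos⟩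
  have hpair : ∀ i j : Fin m, t i < t j →
      (∀ᶠ s in 𝓝[<] lam, β i + t i • γ s < β j + t j • γ s) ∨
        ∀ᶠ s in 𝓝[<] lam, β j + t j • γ s < β i + t i • γ s := fun i j hij =>
    eventually_lt_or_eventually_lt_nhdsLT fun x y hxy hy =>
      add_zsmul_lt_add_zsmul_of_le hij (hmono x y hxy hy)
  obtain ⟨r, hr⟩ := exists_eventually_forall_ne_lt (l := 𝓝[<] lam)
    (f := fun i s => β i + t i • γ s) fun i j hij =>
      (ht.ne hij).lt_or_gt.elim (hpair i j) fun hji => (hpair j i hji).symm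
  obtain ⟨ν, hν, hsub⟩ := (mem_nhdsLT_iff_exists_Ioo_subset' hlam.pos).1 hr
  exact ⟨ν, hν, r, fun i hir s hνs hs => hsub ⟨hνs, hs⟩ i hir⟩

/-- **Ostrowski's lemma, second part.** Let `G` be a linearly ordered abelian group,
`β 0, …, β (m-1) ∈ G` (with `m ≥ 1`), `lam` a limit ordinal, and `(γ s)_{s < lam}` a
well-ordered, monotone increasing family of elements of `G` without a last element. Let
`t 0, …, t (m-1)` be distinct integers. Then there exist an ordinal `ν < lam` and an index `r`
such that `β i + t i • γ s > β r + t r • γ s` for all `i ≠ r` and all `s` with `ν < s < lam`. -/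
theorem ostrowski_minimal_index {G : Type*} [AddCommGroup G] [LinearOrder G] [IsOrderedAddMonoid G]
    (m : ℕ) (hm : 0 < m) (β : Fin m → G)
    (lam : Ordinal.{0}) (hlam : Order.IsSuccLimit lam)
    (γ : Ordinal.{0} → G)
    (hmono : ∀ s s' : Ordinal, s < s' → s' < lam → γ s < γ s')
    (hnolast : ∀ s : Ordinal, s < lam → ∃ s' : Ordinal, s' < lam ∧ s < s')
    (t : Fin m → ℤ) (ht : Function.Injective t) :
    ∃ ν < lam, ∃ r : Fin m, ∀ i : Fin m, i ≠ r → ∀ s : Ordinal, ν < s → s < lam →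
      β r + t r • γ s < β i + t i • γ s :=
  ostrowski_minimal_index_general m hm β lam hlam γ hmono t ht
end

section
/- Let V ⊆ V' be an immediate extension of valuation rings with fraction field extension K ⊆ K', and let (v_i)_{i<λ} be an algebraic pseudo convergent sequence in K which has a pseudo limit x in V', algebraic over V, but no pseudo limit in K. If the minimal polynomial h = Irr(x, K) of x over K has coefficients in V, then val(h(v_i)) < val(h(v_j)) for all large enough i < j < λ. -/
/-! Kaplansky's argument: expanding `f` around its root `x` as `∑ aₖ (y - x)ᵏ`, the values of the
terms `val aₖ · val (y - x)ᵏ`, `k ≥ 1`, are pairwise eventually strictly comparable along the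
sequence, because for `k < k'` the ratio of the `k'`-th to the `k`-th term is `val (y - x)^(k'-k)`
times a constant, which moves strictly in one direction. Hence one term eventually dominates all
others, and `val (f y)` is eventually `c · val (y - x)ᵏ` with `k ≥ 1`, which moves strictly
monotonically along with `val (y - x)`. -/

universe u

open Polynomial

/-- `ValLT V' a b` encodes "`val a < val b`" in the additive convention of valuation theory;
in Mathlib's multiplicative convention for `ValuationSubring.valuation` this is
`V'.valuation b < V'.valuation a`. -/
def ValuationSubring.ValLT {K' : Type u} [Field K'] (V' : ValuationSubring K') (a b : K') : Prop :=
  V'.valuation b < V'.valuation a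

/-- `(v i)_{i < lam}` is a pseudo convergent sequence:
`val (v i - v i'') < val (v i' - v i'')` for all `i < i' < i'' < lam`. -/
def IsPseudoConvergent {K' : Type u} [Field K'] (V' : ValuationSubring K') (lam : Ordinal.{0})
    (v : Ordinal.{0} → K') : Prop :=
  ∀ i i' i'' : Ordinal, i < i' → i' < i'' → i'' < lam →
    V'.ValLT (v i - v i'') (v i' - v i'')

/-- `w` is a pseudo limit of `(v i)_{i < lam}`:
`val (w - v i) < val (w - v i')` for all `i < i' < lam`. -/
def IsPseudoLimit {K' : Type u} [Field K'] (V' : ValuationSubring K') (lam : Ordinal.{0})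
    (v : Ordinal.{0} → K') (w : K') : Prop :=
  ∀ i i' : Ordinal, i < i' → i' < lam → V'.ValLT (w - v i) (w - v i')

/-- All coefficients of the polynomial `f` lie in the subset `R` of `K'`. -/
def CoeffsIn {K' : Type u} [Field K'] (R : Set K') (f : Polynomial K') : Prop :=
  ∀ n : ℕ, f.coeff n ∈ R

/-- `val (f (v i)) < val (f (v j))` for all large enough `i < j < lam`. -/
def EvalValStrictMono {K' : Type u} [Field K'] (V' : ValuationSubring K') (lam : Ordinal.{0})
    (v : Ordinal.{0} → K') (f : Polynomial K') : Prop :=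
  ∃ i₀ < lam, ∀ i j : Ordinal, i₀ ≤ i → i < j → j < lam →
    V'.ValLT (f.eval (v i)) (f.eval (v j))

/-- The pseudo convergent sequence `(v i)_{i<lam}` is algebraic (w.r.t. polynomials with
coefficients in the subset `R`). -/
def IsAlgebraicSeq {K' : Type u} [Field K'] (V' : ValuationSubring K') (R : Set K')
    (lam : Ordinal.{0}) (v : Ordinal.{0} → K') : Prop :=
  ∃ f : Polynomial K', CoeffsIn R f ∧ EvalValStrictMono V' lam v f

/-- `V ⊆ V'` (with `V = V' ∩ K`) is an immediate extension: the inclusion induces isomorphisms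
of value groups and residue fields, i.e. values and residues of elements of `V'` are already
realized by elements of `K` (injectivity being automatic). -/
structure IsImmediateExtension {K' : Type u} [Field K'] (V' : ValuationSubring K')
    (K : Subfield K') : Prop where
  val_surj : ∀ x : K', x ≠ 0 → ∃ y ∈ K, V'.valuation x = V'.valuation y
  residue_surj : ∀ x ∈ V', ∃ y ∈ K, y ∈ V' ∧ V'.valuation (x - y) < 1

/-- The valuation ring `V = V' ∩ K` of the subfield `K`. -/
def valRing {K' : Type u} [Field K'] (V' : ValuationSubring K') (K : Subfield K') : Subring K' :=
  V'.toSubring ⊓ K.toSubring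

/-- `R[x]`, the subring generated by the subring `R` and the element `x`. -/
def Subring.adjoinElt {K' : Type u} [Field K'] (R : Subring K') (x : K') : Subring K' :=
  Subring.closure (↑R ∪ {x})

open Filter

theorem eventually_lt_or_eventually_gt_of_le_imp_lt {ι α : Type*} [Preorder ι] [NoMaxOrder ι]
    [LinearOrder α] {F G : ι → α} (h : ∀ s t, s < t → G s ≤ F s → G t < F t) :
    (∀ᶠ i in atTop, G i < F i) ∨ ∀ᶠ i in atTop, F i < G i := by
  by_cases hex : ∃ s, G s ≤ F s
  · obtain ⟨s, hs⟩ := hex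
    exact .inl <| (eventually_gt_atTop s).mono fun t hst => h s t hst hs
  · simp only [not_exists, not_le] at hex
    exact .inr <| .of_forall hex

theorem Finset.exists_eventually_forall_lt_of_eventually_lt_or_gt {ι κ α : Type*} [LinearOrder α]
    {l : Filter ι} [l.NeBot] {T : Finset κ} (hT : T.Nonempty) {F : κ → ι → α}
    (hF : ∀ k ∈ T, ∀ k' ∈ T, k ≠ k' →
      (∀ᶠ i in l, F k i < F k' i) ∨ ∀ᶠ i in l, F k' i < F k i) :
    ∃ k₀ ∈ T, ∀ᶠ i in l, ∀ k ∈ T, k ≠ k₀ → F k i < F k₀ i := by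
  have hcomp : ∀ᶠ i in l, ∀ k ∈ T, ∀ k' ∈ T, (∀ᶠ j in l, F k j < F k' j) → F k i < F k' i :=
    (eventually_all_finset T).2 fun _ _ => (eventually_all_finset T).2 fun _ _ =>
      eventually_imp_distrib_left.2 id
  obtain ⟨i₀, hi₀⟩ := hcomp.exists
  obtain ⟨k₀, hk₀, hmax⟩ := T.exists_max_image (F · i₀) hT
  refine ⟨k₀, hk₀, (eventually_all_finset T).2 fun k hk =>
    eventually_imp_distrib_left.2 fun hne => ?_⟩
  rcases hF k hk k₀ hk₀ hne with hlt | hgt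
  · exact hlt
  · exact absurd (hi₀ k₀ hk₀ k hk hgt) (hmax k hk).not_gt

theorem mul_pow_lt_of_mul_pow_le {Γ₀ : Type*} [LinearOrderedCommGroupWithZero Γ₀]
    {a b c c' : Γ₀} {k k' : ℕ} (hk : k < k') (hba : b < a) (hb : b ≠ 0) (hc' : c' ≠ 0)
    (h : c' * a ^ k' ≤ c * a ^ k) : c' * b ^ k' < c * b ^ k := by
  obtain ⟨m, rfl⟩ := Nat.exists_eq_add_of_lt hk
  have ha : a ≠ 0 := ne_zero_of_lt hba
  have hle : c' * a ^ (m + 1) ≤ c := by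
    refine le_of_mul_le_mul_right ?_ (zero_lt_iff.2 (pow_ne_zero k ha))
    rwa [mul_assoc, ← pow_add, add_comm (m + 1), ← add_assoc]
  have hlt : c' * b ^ (m + 1) < c :=
    (mul_lt_mul_of_pos_left (pow_lt_pow_left₀ hba zero_le m.succ_ne_zero)
      (zero_lt_iff.2 hc')).trans_le hle
  calc c' * b ^ (k + m + 1) = c' * b ^ (m + 1) * b ^ k := by
        rw [mul_assoc, ← pow_add, add_assoc, add_comm k]
    _ < c * b ^ k := mul_lt_mul_of_pos_right hlt (zero_lt_iff.2 (pow_ne_zero k hb))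

namespace Valuation

variable {K Γ₀ ι : Type*} [Field K] [LinearOrderedCommGroupWithZero Γ₀] (v : Valuation K Γ₀)
  [LinearOrder ι] [NoMaxOrder ι] [Nonempty ι]

theorem exists_eventually_map_eval_eq_mul_pow {f : K[X]} (hf : f ≠ 0) {x : K} (hx : f.IsRoot x)
    {y : ι → K} (hy : StrictAnti fun i => v (y i - x)) :
    ∃ k ≠ 0, ∃ c ≠ (0 : Γ₀), ∀ᶠ i in atTop, v (f.eval (y i)) = c * v (y i - x) ^ k := by
  classical
  set p := taylor x f
  have hγ : ∀ i, v (y i - x) ≠ 0 := fun i =>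
    let ⟨_, hij⟩ := exists_gt i
    ne_zero_of_lt (hy hij)
  have hp : p.support.Nonempty := support_nonempty.2 (by rwa [Ne, taylor_eq_zero])
  have hterms : ∀ i, f.eval (y i) = ∑ k ∈ p.support, p.coeff k * (y i - x) ^ k := fun i => by
    rw [← taylor_eval_sub x, eval_eq_sum, Polynomial.sum_def]
  set term : ℕ → ι → Γ₀ := fun k i => v (p.coeff k) * v (y i - x) ^ k
  have hcomp : ∀ k ∈ p.support, ∀ k' ∈ p.support, k < k' →
      (∀ᶠ i in atTop, term k i < term k' i) ∨ ∀ᶠ i in atTop, term k' i < term k i :=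
    fun k _ k' hk' hkk' => (eventually_lt_or_eventually_gt_of_le_imp_lt fun s t hst =>
      mul_pow_lt_of_mul_pow_le hkk' (hy hst) (hγ t) (v.ne_zero_iff.2 (mem_support_iff.1 hk'))).symm
  obtain ⟨k₀, hk₀, hdom⟩ := p.support.exists_eventually_forall_lt_of_eventually_lt_or_gt hp
    fun k hk k' hk' hne =>
      hne.lt_or_gt.elim (hcomp k hk k' hk') fun hlt => (hcomp k' hk' k hk hlt).symm
  refine ⟨k₀, fun h0 => mem_support_iff.1 hk₀ ?_, v (p.coeff k₀),
    v.ne_zero_iff.2 (mem_support_iff.1 hk₀), hdom.mono fun i hi => ?_⟩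
  · rwa [h0, taylor_coeff_zero]
  rw [hterms, v.map_sum_eq_of_lt hk₀ fun k hk => ?_, map_mul, map_pow]
  obtain ⟨hk, hne⟩ := Finset.mem_sdiff.1 hk
  simpa only [map_mul, map_pow] using hi k hk (Finset.notMem_singleton.1 hne)

theorem exists_strictAntiOn_map_eval {f : K[X]} (hf : f ≠ 0) {x : K} (hx : f.IsRoot x)
    {y : ι → K} (hy : StrictAnti fun i => v (y i - x)) :
    ∃ i₀, StrictAntiOn (fun i => v (f.eval (y i))) (Set.Ici i₀) := by
  obtain ⟨k, hk, c, hc, hev⟩ := v.exists_eventually_map_eval_eq_mul_pow hf hx hy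
  obtain ⟨i₀, hi₀⟩ := eventually_atTop.1 hev
  refine ⟨i₀, fun i hi j hj hij => ?_⟩
  simp only [hi₀ i hi, hi₀ j hj]
  exact mul_lt_mul_of_pos_left (pow_lt_pow_left₀ (hy hij) zero_le hk) (zero_lt_iff.2 hc)

end Valuation

theorem minpoly_eval_val_strictMono_general
    {K' : Type u} [Field K'] (V' : ValuationSubring K')
    (lam : Ordinal.{0}) (hlam : Order.IsSuccLimit lam) (v : Ordinal.{0} → K')
    (x : K') (hxlim : IsPseudoLimit V' lam v x)
    (h : Polynomial K') (hmonic : h.Monic) (hhx : h.eval x = 0) :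
    EvalValStrictMono V' lam v h := by
  have := hlam.isSuccPrelimit.noMaxOrder_Iio
  have : Nonempty (Set.Iio lam) := ⟨⟨0, hlam.bot_lt⟩⟩
  have hy : StrictAnti fun i : Set.Iio lam => V'.valuation (v i - x) := fun i j hij => by
    simpa only [ValuationSubring.ValLT, Valuation.map_sub_swap] using hxlim i j hij j.2
  obtain ⟨i₀, hi₀⟩ := V'.valuation.exists_strictAntiOn_map_eval hmonic.ne_zero hhx hy
  exact ⟨i₀, i₀.2, fun i j hi hij hj =>
    hi₀ (a := ⟨i, hij.trans hj⟩) hi (b := ⟨j, hj⟩) (hi.trans hij.le) hij⟩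

/-- **Lemma 3(1) of the paper.** Let `V ⊆ V'` be an immediate extension of valuation rings
(`V = V' ∩ K`) and `(v i)_{i<lam}` an algebraic pseudo convergent sequence in `K` which has a
pseudo limit `x` in `V'`, algebraic over `V`, but no pseudo limit in `K`. If the monic minimal
polynomial `h = Irr(x, K)` of `x` over `K` has all its coefficients in `V`, then
`val (h (v i)) < val (h (v j))` for all large enough `i < j < lam`. -/
theorem minpoly_eval_val_strictMono
    {K' : Type u} [Field K'] (V' : ValuationSubring K') (K : Subfield K')
    (himm : IsImmediateExtension V' K)
    (lam : Ordinal.{0}) (hlam : Order.IsSuccLimit lam) (v : Ordinal.{0} → K')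
    (hvK : ∀ i < lam, v i ∈ K)
    (hpc : IsPseudoConvergent V' lam v)
    (halgseq : IsAlgebraicSeq V' (↑K) lam v)
    (x : K') (hxV' : x ∈ V') (hxlim : IsPseudoLimit V' lam v x)
    (hxalg : ∃ f : Polynomial K', f ≠ 0 ∧ CoeffsIn (↑(valRing V' K)) f ∧ f.eval x = 0)
    (hnoK : ∀ w ∈ K, ¬ IsPseudoLimit V' lam v w)
    (h : Polynomial K') (hmonic : h.Monic) (hhK : CoeffsIn (↑K) h) (hhx : h.eval x = 0)
    (hminpoly : ∀ f : Polynomial K', f ≠ 0 → CoeffsIn (↑K) f → f.eval x = 0 →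
      h.degree ≤ f.degree)
    (hhV : CoeffsIn (↑(valRing V' K)) h) :
    EvalValStrictMono V' lam v h :=
  minpoly_eval_val_strictMono_general V' lam hlam v x hxlim h hmonic hhx
end

section
/- Let V ⊆ V' be an immediate extension of valuation rings with fraction field extension K ⊆ K', and let (v_i)_{i<λ} be an algebraic pseudo convergent sequence in K which has a pseudo limit x in V', algebraic over V, but no pseudo limit in K. Suppose h = Irr(x, K) lies in V[X] and has minimal degree among the polynomials f ∈ V[X] such that val(f(v_i)) < val(f(v_j)) for all large i < j < λ. For i < λ set x_i = (x − v_i)/(v_{i+1} − v_i) ∈ V', and let m' be the maximal ideal of V'. Then V'' = V' ∩ K(x) equals the union over i < λ of the localizations V[x_i]_{m' ∩ V[x_i]}, and this family of subrings is filtered increasing. -/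
universe u

open Polynomial

/-- `K(x)`, the subfield generated by the subfield `K` and the element `x`. -/
def Subfield.adjoinElt {K' : Type u} [Field K'] (K : Subfield K') (x : K') : Subfield K' :=
  Subfield.closure (↑K ∪ {x})

/-- The localization `R_{m' ∩ R}` of the subring `R ⊆ V'` at the prime ideal `m' ∩ R`, where
`m'` is the maximal ideal of the valuation subring `V'` (the elements of multiplicative
valuation `< 1`), regarded as a subset of the ambient field: the fractions `a / b` with
`a, b ∈ R` and `b ∉ m'`. -/
def locSet {K' : Type u} [Field K'] (V' : ValuationSubring K') (R : Subring K') : Set K' :=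
  {z : K' | ∃ a ∈ R, ∃ b ∈ R, ¬ V'.valuation b < 1 ∧ z = a / b}

/-!
Since `h` is monic with `h x = 0`, every `z ∈ K(x)` is `f x` for some `f ∈ K[X]` with
`deg f < deg h`. Expand `f` in powers of `X - x` and evaluate at `v i`: as `val (x - v i)` increases
strictly, one monomial eventually dominates. If it were not the constant one, `val (f (v i))`
would increase strictly for large `i`, contradicting the minimality of `deg h` (after scaling `f`
into `V[X]`). Hence `val (f (v i)) = val (f x)` for large `i`, and re-expanding `f` at `v i` in
powers of `x - v i = (v (i + 1) - v i) x_i` writes `f x / f (v i)` as a polynomial in `x_i` over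
`V`; since `f (v i) ∈ V`, `z ∈ V[x_i]`. The rings `V[x_i]` increase because `x_i` is an affine
function of `x_j` over `V` for `i ≤ j`.
-/

open Filter Topology

section ConstCoeffDominates

variable {F Γ₀ : Type*} [Field F] [LinearOrderedCommGroupWithZero Γ₀] (w : Valuation F Γ₀)

theorem Valuation.map_natCast_le_one (n : ℕ) : w n ≤ 1 := by
  induction n with
  | zero => simp
  | succ n ih => exact (Nat.cast_succ (R := F) n) ▸ w.map_add_le ih w.map_one.le

theorem Valuation.map_eval_eq_of_forall_lt {g : F[X]} {t : F} {k₀ : ℕ}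
    (hg : ∀ k ≠ k₀, w (g.coeff k * t ^ k) < w (g.coeff k₀ * t ^ k₀)) :
    w (g.eval t) = w (g.coeff k₀ * t ^ k₀) := by
  have hk₀ : k₀ < g.natDegree + 1 := by
    by_contra! hle
    have := hg (k₀ + 1) (by omega)
    rw [coeff_eq_zero_of_natDegree_lt (show g.natDegree < k₀ by omega), zero_mul, map_zero] at this
    exact not_lt_zero this
  rw [eval_eq_sum_range]
  exact w.map_sum_eq_of_lt (Finset.mem_range.2 hk₀) fun k hk =>
    hg k (Finset.notMem_singleton.1 (Finset.mem_sdiff.1 hk).2)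

def ConstCoeffDominates (g : F[X]) (t : F) : Prop :=
  ∀ k ≠ 0, w (g.coeff k * t ^ k) < w (g.coeff 0)

variable {w} {g : F[X]} {s t : F}

namespace ConstCoeffDominates

theorem mono (hg : ConstCoeffDominates w g t) (hst : w s ≤ w t) : ConstCoeffDominates w g s := by
  refine fun k hk => lt_of_le_of_lt ?_ (hg k hk)
  simp only [map_mul, map_pow]
  gcongr

theorem map_eval (hg : ConstCoeffDominates w g t) : w (g.eval t) = w (g.coeff 0) := by
  simpa using w.map_eval_eq_of_forall_lt (k₀ := 0) fun k hk => by simpa using hg k hk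

theorem coeff_zero_ne_zero (hg : ConstCoeffDominates w g t) : g.coeff 0 ≠ 0 := by
  intro h0
  have := hg 1 one_ne_zero
  rw [h0, map_zero] at this
  exact not_lt_zero this

/-- Each Taylor coefficient at `s` is a sum of terms `binom(n + k, k) * g.coeff (n + k) * s ^ n`,
so moving the centre by `s` with `w s ≤ w t` keeps the constant coefficient dominant at `t`. -/
theorem taylor (hg : ConstCoeffDominates w g t) (hst : w s ≤ w t) :
    ConstCoeffDominates w (taylor s g) t := by
  intro k hk
  rw [taylor_coeff_zero, (hg.mono hst).map_eval, taylor_coeff, eval_eq_sum_range, Finset.sum_mul]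
  refine w.map_sum_lt ((w.ne_zero_iff).2 hg.coeff_zero_ne_zero) fun n _ => ?_
  calc w ((hasseDeriv k g).coeff n * s ^ n * t ^ k)
      = w ((n + k).choose k) * (w (g.coeff (n + k)) * w s ^ n * w t ^ k) := by
        simp only [hasseDeriv_coeff, map_mul, map_pow, mul_assoc]
    _ ≤ 1 * (w (g.coeff (n + k)) * w t ^ n * w t ^ k) := by
        gcongr
        exact w.map_natCast_le_one _
    _ = w (g.coeff (n + k) * t ^ (n + k)) := by
        rw [one_mul, map_mul, map_pow, pow_add, mul_assoc]
    _ < w (g.coeff 0) := hg (n + k) (by omega)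

end ConstCoeffDominates

end ConstCoeffDominates

section Eventually

variable {α : Type*} [LinearOrder α] [TopologicalSpace α] [OrderTopology α]

theorem StrictAntiOn.eventually_lt_or_eventually_gt {β : Type*} [LinearOrder β] {φ : α → β}
    {a : α} (hφ : StrictAntiOn φ (Set.Iio a)) (b : β) :
    (∀ᶠ i in 𝓝[<] a, φ i < b) ∨ ∀ᶠ i in 𝓝[<] a, b < φ i := by
  by_cases h : ∃ i < a, φ i ≤ b
  · obtain ⟨i, hi, hφi⟩ := h
    exact Or.inl <| eventually_of_mem (Ioo_mem_nhdsLT hi) fun j hj =>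
      (hφ hi hj.2 hj.1).trans_le hφi
  · push Not at h
    exact Or.inr <| eventually_of_mem self_mem_nhdsWithin h

theorem Order.IsSuccLimit.exists_forall_of_eventually_nhdsLT [SuccOrder α] {a : α}
    (ha : IsSuccLimit a) {P : α → Prop} (h : ∀ᶠ i in 𝓝[<] a, P i) :
    ∃ i₀ < a, ∀ i, i₀ ≤ i → i < a → P i := by
  obtain ⟨b, hb⟩ := not_isMin_iff.1 ha.not_isMin
  obtain ⟨l, hl, hsub⟩ := (mem_nhdsLT_iff_exists_Ioo_subset' hb).1 h
  exact ⟨succ l, ha.succ_lt hl, fun i hi hia =>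
    hsub ⟨(lt_succ_of_not_isMax (not_isMax_of_lt hl)).trans_le hi, hia⟩⟩

end Eventually

theorem Finset.exists_eventually_forall_lt {ι α Γ : Type*} [LinearOrder Γ] {l : Filter α}
    {s : Finset ι} (hs : s.Nonempty) (T : ι → α → Γ)
    (hT : ∀ k ∈ s, ∀ k' ∈ s, k ≠ k' → (∀ᶠ a in l, T k a < T k' a) ∨ ∀ᶠ a in l, T k' a < T k a) :
    ∃ k₀ ∈ s, ∀ᶠ a in l, ∀ k ∈ s, k ≠ k₀ → T k a < T k₀ a := by
  induction hs using Finset.Nonempty.cons_induction with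
  | singleton a =>
    exact ⟨a, mem_singleton_self a,
      Eventually.of_forall fun _ k hk hka => absurd (mem_singleton.1 hk) hka⟩
  | cons a t ha ht ih =>
    obtain ⟨k₁, hk₁, hdom⟩ := ih fun k hk k' hk' =>
      hT k (mem_cons_of_mem hk) k' (mem_cons_of_mem hk')
    have hak₁ : a ≠ k₁ := fun h => ha (h ▸ hk₁)
    rcases hT a (mem_cons_self a t) k₁ (mem_cons_of_mem hk₁) hak₁ with hlt | hlt
    · refine ⟨k₁, mem_cons_of_mem hk₁, (hdom.and hlt).mono fun i ⟨hdom, hlt⟩ k hk hkk₁ => ?_⟩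
      rcases mem_cons.1 hk with rfl | hk
      · exact hlt
      · exact hdom k hk hkk₁
    · refine ⟨a, mem_cons_self a t, (hdom.and hlt).mono fun i ⟨hdom, hlt⟩ k hk hka => ?_⟩
      rcases mem_cons.1 hk with rfl | hk
      · exact absurd rfl hka
      rcases eq_or_ne k k₁ with rfl | hkk₁
      · exact hlt
      · exact (hdom k hk hkk₁).trans hlt

variable {K' : Type*} [Field K']

namespace Subring

variable {R S : Subring K'} {t y : K'}

theorem mem_adjoinElt_of_mem (hy : y ∈ R) : y ∈ R.adjoinElt t :=
  subset_closure (Or.inl hy)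

theorem self_mem_adjoinElt (R : Subring K') (t : K') : t ∈ R.adjoinElt t :=
  subset_closure (Or.inr rfl)

theorem adjoinElt_le (hRS : R ≤ S) (ht : t ∈ S) : R.adjoinElt t ≤ S :=
  closure_le.2 (Set.union_subset hRS (Set.singleton_subset_iff.2 ht))

end Subring

theorem mem_valRing {V' : ValuationSubring K'} {K : Subfield K'} {y : K'} :
    y ∈ valRing V' K ↔ y ∈ V' ∧ y ∈ K :=
  Iff.rfl

section CoeffsIn

variable {S : Type*} [SetLike S K'] [SubringClass S K'] {s : S} {g : K'[X]} {r : K'}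

theorem CoeffsIn.eval_mem (hg : CoeffsIn s g) (hr : r ∈ s) : g.eval r ∈ s := by
  rw [eval_eq_sum_range]
  exact sum_mem fun k _ => mul_mem (hg k) (pow_mem hr k)

theorem CoeffsIn.taylor (hg : CoeffsIn s g) (hr : r ∈ s) : CoeffsIn s (taylor r g) := by
  intro k
  rw [taylor_coeff]
  refine CoeffsIn.eval_mem (fun n => ?_) hr
  rw [hasseDeriv_coeff]
  exact mul_mem (natCast_mem s _) (hg (n + k))

end CoeffsIn

theorem ConstCoeffDominates.eval_mul_div_mem_adjoinElt {V' : ValuationSubring K'}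
    {K : Subfield K'} {g : K'[X]} {δ : K'} (hg : ConstCoeffDominates V'.valuation g δ)
    (hgK : CoeffsIn K g) (hδ : δ ∈ K) (ξ : K') :
    g.eval (δ * ξ) / g.coeff 0 ∈ (valRing V' K).adjoinElt ξ := by
  rw [eval_eq_sum_range, Finset.sum_div]
  refine sum_mem fun k _ => ?_
  rw [mul_pow, ← mul_assoc, mul_div_right_comm]
  refine mul_mem (Subring.mem_adjoinElt_of_mem (mem_valRing.2 ⟨?_, ?_⟩))
    (pow_mem (Subring.self_mem_adjoinElt _ _) k)
  · refine V'.mem_of_valuation_le_one _ ?_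
    rw [map_div₀, div_le_one₀ ((Valuation.pos_iff _).2 hg.coeff_zero_ne_zero)]
    rcases eq_or_ne k 0 with rfl | hk
    · simp
    · exact (hg k hk).le
  · exact div_mem (mul_mem (hgK k) (pow_mem hδ k)) (hgK 0)

theorem Subfield.adjoinElt_eq_adjoin_toSubfield (K : Subfield K') (x : K') :
    K.adjoinElt x = (IntermediateField.adjoin K {x}).toSubfield := by
  rw [IntermediateField.adjoin_toSubfield, Subfield.adjoinElt]
  congr
  exact Subtype.range_coe.symm

theorem exists_eval_eq_of_mem_adjoinElt {K : Subfield K'} {x : K'} {h : K'[X]} (hmonic : h.Monic)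
    (hhK : CoeffsIn K h) (hhx : h.eval x = 0) {z : K'} (hz : z ∈ K.adjoinElt x) :
    ∃ f : K'[X], CoeffsIn K f ∧ f.degree < h.degree ∧ f.eval x = z := by
  have hlifts : h ∈ lifts (algebraMap K K') :=
    (lifts_iff_coeff_lifts h).2 fun n => ⟨⟨_, hhK n⟩, rfl⟩
  obtain ⟨H, hHh, hHdeg, hHmonic⟩ := lifts_and_degree_eq_and_monic hlifts hmonic
  have hHx : aeval x H = 0 := by rw [aeval_def, eval₂_eq_eval_map, hHh, hhx]
  have hzx : z ∈ Algebra.adjoin K {x} := by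
    rw [← IntermediateField.adjoin_simple_toSubalgebra_of_isAlgebraic ⟨H, hHmonic.ne_zero, hHx⟩]
    rwa [Subfield.adjoinElt_eq_adjoin_toSubfield] at hz
  obtain ⟨p, rfl⟩ := (Algebra.adjoin_singleton_eq_range_aeval K x ▸ hzx :)
  refine ⟨(p %ₘ H).map (algebraMap K K'), fun n => ?_, ?_, ?_⟩
  · rw [coeff_map]; exact ((p %ₘ H).coeff n).2
  · rw [degree_map, ← hHdeg]; exact degree_modByMonic_lt p hHmonic
  · rw [← eval₂_eq_eval_map, ← aeval_def, aeval_modByMonic_eq_self_of_root hHx]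
    rfl

section Localization

variable {V' : ValuationSubring K'} {R S : Subring K'}

theorem subset_locSet (R : Subring K') : (R : Set K') ⊆ locSet V' R :=
  fun z hz => ⟨z, hz, 1, one_mem R, by simp, (div_one z).symm⟩

theorem locSet_mono (hRS : R ≤ S) : locSet V' R ⊆ locSet V' S := by
  rintro z ⟨a, ha, b, hb, hb1, rfl⟩
  exact ⟨a, hRS ha, b, hRS hb, hb1, rfl⟩

theorem locSet_subset_valuationSubring (hR : R ≤ V'.toSubring) : locSet V' R ⊆ V' := by
  rintro z ⟨a, ha, b, hb, hb1, rfl⟩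
  have hb : V'.valuation b = 1 := le_antisymm (V'.valuation_le_one ⟨b, hR hb⟩) (not_lt.1 hb1)
  refine V'.mem_of_valuation_le_one _ ?_
  rw [map_div₀, hb, div_one]
  exact V'.valuation_le_one ⟨a, hR ha⟩

theorem locSet_subset_subfield {L : Subfield K'} (hR : R ≤ L.toSubring) : locSet V' R ⊆ L := by
  rintro z ⟨a, ha, b, hb, -, rfl⟩
  exact div_mem (hR ha) (hR hb)

end Localization

section Scaling

variable {V' : ValuationSubring K'} {K : Subfield K'} {lam : Ordinal.{0}}
  {v : Ordinal.{0} → K'} {f : K'[X]}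

theorem EvalValStrictMono.C_mul (hf : EvalValStrictMono V' lam v f) {c : K'} (hc : c ≠ 0) :
    EvalValStrictMono V' lam v (C c * f) := by
  obtain ⟨i₀, hi₀, h⟩ := hf
  refine ⟨i₀, hi₀, fun i j hi hij hj => ?_⟩
  change V'.valuation ((C c * f).eval (v j)) < V'.valuation ((C c * f).eval (v i))
  simp only [eval_mul, eval_C, map_mul]
  exact mul_lt_mul_of_pos_left (h i j hi hij hj) ((Valuation.pos_iff _).2 hc)

/-- Divide by a coefficient of largest value. -/
theorem CoeffsIn.exists_C_mul_coeffsIn_valRing (hfK : CoeffsIn K f) (hf : f ≠ 0) :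
    ∃ c ≠ 0, CoeffsIn (↑(valRing V' K)) (C c * f) := by
  obtain ⟨k₀, hk₀, hmax⟩ :=
    f.support.exists_max_image (fun k => V'.valuation (f.coeff k)) (nonempty_support_iff.2 hf)
  have hc : f.coeff k₀ ≠ 0 := mem_support_iff.1 hk₀
  refine ⟨(f.coeff k₀)⁻¹, inv_ne_zero hc, fun n => ?_⟩
  rw [coeff_C_mul]
  refine mem_valRing.2 ⟨V'.mem_of_valuation_le_one _ ?_, mul_mem (inv_mem (hfK k₀)) (hfK n)⟩
  rw [map_mul, map_inv₀, inv_mul_le_one₀ ((Valuation.pos_iff _).2 hc)]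
  by_cases hn : n ∈ f.support
  · exact hmax n hn
  · rw [notMem_support_iff.1 hn, map_zero]
    exact zero_le

end Scaling

section PseudoLimit

variable {V' : ValuationSubring K'} {K : Subfield K'} {lam : Ordinal.{0}}
  {v : Ordinal.{0} → K'} {x : K'}

namespace IsPseudoLimit

variable (hxlim : IsPseudoLimit V' lam v x)
include hxlim

theorem valuation_lt {i j : Ordinal} (hij : i < j) (hj : j < lam) :
    V'.valuation (x - v j) < V'.valuation (x - v i) :=
  hxlim i j hij hj

theorem valuation_sub_eq {i j : Ordinal} (hij : i < j) (hj : j < lam) :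
    V'.valuation (v j - v i) = V'.valuation (x - v i) := by
  rw [← sub_sub_sub_cancel_left (v i) (v j) x]
  exact Valuation.map_sub_eq_of_lt_left _ (hxlim.valuation_lt hij hj)

theorem strictAntiOn_valuation_mul_pow {c : K'} (hc : c ≠ 0) {d : ℕ} (hd : d ≠ 0) :
    StrictAntiOn (fun i => V'.valuation (c * (v i - x) ^ d)) (Set.Iio lam) := by
  intro i _ j hj hij
  simp only [map_mul, map_pow, Valuation.map_sub_swap _ (v _)]
  exact mul_lt_mul_of_pos_left (pow_lt_pow_left₀ (hxlim.valuation_lt hij hj) zero_le hd)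
    ((Valuation.pos_iff _).2 hc)

variable (hlam : Order.IsSuccLimit lam)
include hlam

theorem apply_ne {i : Ordinal} (hi : i < lam) : v i ≠ x := by
  intro h0
  have := hxlim.valuation_lt (lt_add_one i) (hlam.add_one_lt hi)
  rw [h0, sub_self, map_zero] at this
  exact not_lt_zero this

theorem valuation_succ_sub {i : Ordinal} (hi : i < lam) :
    V'.valuation (v (i + 1) - v i) = V'.valuation (x - v i) :=
  hxlim.valuation_sub_eq (lt_add_one i) (hlam.add_one_lt hi)

theorem succ_sub_ne_zero {i : Ordinal} (hi : i < lam) : v (i + 1) - v i ≠ 0 := by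
  rw [← (Valuation.ne_zero_iff V'.valuation), hxlim.valuation_succ_sub hlam hi,
    Valuation.ne_zero_iff]
  exact sub_ne_zero.2 (hxlim.apply_ne hlam hi).symm

theorem div_succ_sub_mem {i : Ordinal} (hi : i < lam) :
    (x - v i) / (v (i + 1) - v i) ∈ V' := by
  refine V'.mem_of_valuation_le_one _ (le_of_eq ?_)
  rw [map_div₀, hxlim.valuation_succ_sub hlam hi, div_self]
  exact (Valuation.ne_zero_iff _).2 (sub_ne_zero.2 (hxlim.apply_ne hlam hi).symm)

theorem eventually_lt_or_eventually_gt_of_lt (c : K') {c' : K'} (hc' : c' ≠ 0) {k k' : ℕ}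
    (hkk' : k < k') :
    (∀ᶠ i in 𝓝[<] lam, V'.valuation (c * (v i - x) ^ k) < V'.valuation (c' * (v i - x) ^ k')) ∨
      ∀ᶠ i in 𝓝[<] lam, V'.valuation (c' * (v i - x) ^ k') < V'.valuation (c * (v i - x) ^ k) := by
  have hsplit : ∀ i, V'.valuation (c' * (v i - x) ^ k') =
      V'.valuation (c' * (v i - x) ^ (k' - k)) * V'.valuation ((v i - x) ^ k) := fun i => by
    rw [← map_mul, mul_assoc, ← pow_add, Nat.sub_add_cancel hkk'.le]
  have hpos : ∀ᶠ i in 𝓝[<] lam, 0 < V'.valuation ((v i - x) ^ k) :=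
    eventually_mem_nhdsWithin.mono fun i hi => (Valuation.pos_iff _).2 <|
      pow_ne_zero _ (sub_ne_zero.2 (hxlim.apply_ne hlam hi))
  rcases (hxlim.strictAntiOn_valuation_mul_pow hc'
    (Nat.sub_ne_zero_of_lt hkk')).eventually_lt_or_eventually_gt (V'.valuation c) with h | h
  · right
    filter_upwards [h, hpos] with i hi hpos
    rw [hsplit, map_mul V'.valuation c]
    exact mul_lt_mul_of_pos_right hi hpos
  · left
    filter_upwards [h, hpos] with i hi hpos
    rw [hsplit, map_mul V'.valuation c]
    exact mul_lt_mul_of_pos_right hi hpos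

theorem evalValStrictMono_or_eventually_constCoeffDominates {f : K'[X]} (hf : f ≠ 0) :
    EvalValStrictMono V' lam v f ∨
      ∀ᶠ i in 𝓝[<] lam, ConstCoeffDominates V'.valuation (taylor x f) (v i - x) := by
  set c := taylor x f
  set T : ℕ → Ordinal → V'.ValueGroup := fun k i => V'.valuation (c.coeff k * (v i - x) ^ k)
  obtain ⟨k₀, hk₀, hdom⟩ := Finset.exists_eventually_forall_lt
    (nonempty_support_iff.2 (mt (taylor_eq_zero x f).1 hf)) T fun k hk k' hk' hkk' => by
      rcases hkk'.lt_or_gt with hlt | hlt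
      · exact hxlim.eventually_lt_or_eventually_gt_of_lt hlam _ (mem_support_iff.1 hk') hlt
      · exact (hxlim.eventually_lt_or_eventually_gt_of_lt hlam _ (mem_support_iff.1 hk) hlt).symm
  have hdom' : ∀ᶠ i in 𝓝[<] lam, ∀ k ≠ k₀, T k i < T k₀ i := by
    filter_upwards [hdom, eventually_mem_nhdsWithin] with i hdom hi k hk
    by_cases hkc : k ∈ c.support
    · exact hdom k hkc hk
    · simp only [T, notMem_support_iff.1 hkc, zero_mul, map_zero]
      exact (Valuation.pos_iff _).2 <| mul_ne_zero (mem_support_iff.1 hk₀)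
        (pow_ne_zero _ (sub_ne_zero.2 (hxlim.apply_ne hlam hi)))
  rcases eq_or_ne k₀ 0 with rfl | hk₀0
  · refine Or.inr (hdom'.mono fun i hi k hk => ?_)
    simpa [T] using hi k hk
  · obtain ⟨i₀, hi₀, h⟩ := hlam.exists_forall_of_eventually_nhdsLT hdom'
    have hval : ∀ l, i₀ ≤ l → l < lam → V'.valuation (f.eval (v l)) = T k₀ l := fun l hl hl' => by
      rw [← taylor_eval_sub x f (v l)]
      exact V'.valuation.map_eval_eq_of_forall_lt (h l hl hl')
    refine Or.inl ⟨i₀, hi₀, fun i j hi hij hj => ?_⟩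
    change V'.valuation (f.eval (v j)) < V'.valuation (f.eval (v i))
    rw [hval i hi (hij.trans hj), hval j (hi.trans hij.le) hj]
    exact hxlim.strictAntiOn_valuation_mul_pow (mem_support_iff.1 hk₀) hk₀0 (hij.trans hj) hj hij

variable (hvK : ∀ i < lam, v i ∈ K)
include hvK

/-- `x_i = (v (j+1) - v j) / (v (i+1) - v i) * x_j + (v j - v i) / (v (i+1) - v i)`, and both
coefficients lie in `V` because `val (x - v j) ≥ val (x - v i) = val (v j - v i)`. -/
theorem div_succ_sub_mem_adjoinElt {i j : Ordinal} (hij : i ≤ j) (hj : j < lam) :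
    (x - v i) / (v (i + 1) - v i) ∈
      (valRing V' K).adjoinElt ((x - v j) / (v (j + 1) - v j)) := by
  rcases hij.eq_or_lt with rfl | hij
  · exact Subring.self_mem_adjoinElt _ _
  have hi := hij.trans hj
  have hδi := hxlim.succ_sub_ne_zero hlam hi
  have hδK : ∀ k < lam, v (k + 1) - v k ∈ K := fun k hk =>
    sub_mem (hvK _ (hlam.add_one_lt hk)) (hvK k hk)
  have hδi_pos : 0 < V'.valuation (v (i + 1) - v i) := (Valuation.pos_iff _).2 hδi
  have hξ : (x - v i) / (v (i + 1) - v i) =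
      (v (j + 1) - v j) / (v (i + 1) - v i) * ((x - v j) / (v (j + 1) - v j)) +
        (v j - v i) / (v (i + 1) - v i) := by
    field_simp [hxlim.succ_sub_ne_zero hlam hj]
    ring
  rw [hξ]
  refine add_mem (mul_mem (Subring.mem_adjoinElt_of_mem (mem_valRing.2 ⟨?_, ?_⟩))
    (Subring.self_mem_adjoinElt _ _)) (Subring.mem_adjoinElt_of_mem (mem_valRing.2 ⟨?_, ?_⟩))
  · refine V'.mem_of_valuation_le_one _ ?_
    rw [map_div₀, div_le_one₀ hδi_pos, hxlim.valuation_succ_sub hlam hi,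
      hxlim.valuation_succ_sub hlam hj]
    exact (hxlim.valuation_lt hij hj).le
  · exact div_mem (hδK j hj) (hδK i hi)
  · refine V'.mem_of_valuation_le_one _ ?_
    rw [map_div₀, div_le_one₀ hδi_pos, hxlim.valuation_succ_sub hlam hi,
      hxlim.valuation_sub_eq hij hj]
  · exact div_mem (sub_mem (hvK j hj) (hvK i hi)) (hδK i hi)

theorem adjoinElt_mono {i j : Ordinal} (hij : i ≤ j) (hj : j < lam) :
    (valRing V' K).adjoinElt ((x - v i) / (v (i + 1) - v i)) ≤
      (valRing V' K).adjoinElt ((x - v j) / (v (j + 1) - v j)) :=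
  Subring.adjoinElt_le (fun _ hy => Subring.mem_adjoinElt_of_mem hy)
    (hxlim.div_succ_sub_mem_adjoinElt hlam hvK hij hj)

theorem locSet_adjoinElt_subset {i : Ordinal} (hi : i < lam) :
    locSet V' ((valRing V' K).adjoinElt ((x - v i) / (v (i + 1) - v i))) ⊆
      (V' : Set K') ∩ K.adjoinElt x := by
  have hKx : ∀ y ∈ K, y ∈ K.adjoinElt x := fun y hy => Subfield.subset_closure (Or.inl hy)
  have hx : x ∈ K.adjoinElt x := Subfield.subset_closure (Or.inr rfl)
  refine fun z hz => ⟨locSet_subset_valuationSubring ?_ hz, locSet_subset_subfield ?_ hz⟩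
  · exact Subring.adjoinElt_le inf_le_left (hxlim.div_succ_sub_mem hlam hi)
  · refine Subring.adjoinElt_le (fun y hy => hKx y (mem_valRing.1 hy).2) ?_
    exact (Subfield.mem_toSubring _ _).2 <| div_mem (sub_mem hx (hKx _ (hvK i hi)))
      (sub_mem (hKx _ (hvK _ (hlam.add_one_lt hi))) (hKx _ (hvK i hi)))

theorem eval_mem_adjoinElt {f : K'[X]} (hfK : CoeffsIn K f) (hfV : f.eval x ∈ V') {i : Ordinal}
    (hi : i < lam)
    (hdom : ConstCoeffDominates V'.valuation (taylor x f) (v i - x)) :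
    f.eval x ∈ (valRing V' K).adjoinElt ((x - v i) / (v (i + 1) - v i)) := by
  have hval : V'.valuation (f.eval (v i)) = V'.valuation (f.eval x) := by
    rw [← taylor_eval_sub x f (v i), hdom.map_eval, taylor_coeff_zero]
  have hdom' : ConstCoeffDominates V'.valuation (taylor (v i) f) (v (i + 1) - v i) := by
    have := hdom.taylor le_rfl
    rw [taylor_taylor, sub_add_cancel] at this
    refine this.mono (le_of_eq ?_)
    rw [hxlim.valuation_succ_sub hlam hi, Valuation.map_sub_swap]
  have hquot := hdom'.eval_mul_div_mem_adjoinElt (hfK.taylor (hvK i hi))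
    (sub_mem (hvK _ (hlam.add_one_lt hi)) (hvK i hi)) ((x - v i) / (v (i + 1) - v i))
  rw [mul_div_cancel₀ _ (hxlim.succ_sub_ne_zero hlam hi), taylor_eval_sub,
    taylor_coeff_zero] at hquot
  have hfvi : f.eval (v i) ≠ 0 := taylor_coeff_zero (v i) f ▸ hdom'.coeff_zero_ne_zero
  rw [← mul_div_cancel₀ (f.eval x) hfvi]
  refine mul_mem (Subring.mem_adjoinElt_of_mem (mem_valRing.2 ⟨?_, hfK.eval_mem (hvK i hi)⟩)) hquot
  exact V'.mem_of_valuation_le_one _ (hval ▸ V'.valuation_le_one ⟨_, hfV⟩)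

theorem exists_mem_adjoinElt_of_mem {h : K'[X]} (hmonic : h.Monic) (hhK : CoeffsIn K h)
    (hhx : h.eval x = 0)
    (hdegmin : ∀ f : K'[X], CoeffsIn (↑(valRing V' K)) f →
      EvalValStrictMono V' lam v f → h.degree ≤ f.degree)
    {z : K'} (hzV : z ∈ V') (hzK : z ∈ K.adjoinElt x) :
    ∃ i < lam, z ∈ (valRing V' K).adjoinElt ((x - v i) / (v (i + 1) - v i)) := by
  obtain ⟨f, hfK, hfh, rfl⟩ := exists_eval_eq_of_mem_adjoinElt hmonic hhK hhx hzK
  rcases eq_or_ne f 0 with rfl | hf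
  · exact ⟨0, hlam.pos, by simp⟩
  have hnot : ¬ EvalValStrictMono V' lam v f := fun hmono => by
    obtain ⟨c, hc, hcV⟩ := hfK.exists_C_mul_coeffsIn_valRing (V' := V') hf
    have := hdegmin _ hcV (hmono.C_mul hc)
    rw [degree_C_mul hc] at this
    exact this.not_gt hfh
  obtain ⟨i, hi, hdom⟩ := hlam.exists_forall_of_eventually_nhdsLT
    ((hxlim.evalValStrictMono_or_eventually_constCoeffDominates hlam hf).resolve_left hnot)
  exact ⟨i, hi, hxlim.eval_mem_adjoinElt hlam hvK hfK hzV hi (hdom i le_rfl hi)⟩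

end IsPseudoLimit

end PseudoLimit

theorem valRing_adjoin_eq_union_localizations_general
    {K' : Type u} [Field K'] (V' : ValuationSubring K') (K : Subfield K')
    (lam : Ordinal.{0}) (hlam : Order.IsSuccLimit lam) (v : Ordinal.{0} → K')
    (hvK : ∀ i < lam, v i ∈ K)
    (x : K') (hxlim : IsPseudoLimit V' lam v x)
    (h : Polynomial K') (hmonic : h.Monic) (hhK : CoeffsIn (↑K) h) (hhx : h.eval x = 0)
    (hdegmin : ∀ f : Polynomial K', CoeffsIn (↑(valRing V' K)) f →
      EvalValStrictMono V' lam v f → h.degree ≤ f.degree) :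
    (∀ z : K', (z ∈ V' ∧ z ∈ K.adjoinElt x) ↔
      ∃ i < lam, z ∈ locSet V' ((valRing V' K).adjoinElt ((x - v i) / (v (i + 1) - v i)))) ∧
    (∀ i j : Ordinal, i ≤ j → j < lam →
      locSet V' ((valRing V' K).adjoinElt ((x - v i) / (v (i + 1) - v i))) ⊆
        locSet V' ((valRing V' K).adjoinElt ((x - v j) / (v (j + 1) - v j)))) := by
  refine ⟨fun z => ⟨fun ⟨hzV, hzK⟩ => ?_, fun ⟨i, hi, hz⟩ =>
    hxlim.locSet_adjoinElt_subset hlam hvK hi hz⟩,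
    fun i j hij hj => locSet_mono (hxlim.adjoinElt_mono hlam hvK hij hj)⟩
  obtain ⟨i, hi, hz⟩ := hxlim.exists_mem_adjoinElt_of_mem hlam hvK hmonic hhK hhx hdegmin hzV hzK
  exact ⟨i, hi, subset_locSet _ hz⟩

/-- **Lemma 3(2) of the paper, explicit form.** With the hypotheses of Lemma 3(2),
`V'' = V' ∩ K(x)` equals the union over `i < lam` of the localizations
`V[x_i]_{m' ∩ V[x_i]}` with `x_i = (x - v i)/(v (i+1) - v i)`, and this family of subrings is
filtered increasing. -/
theorem valRing_adjoin_eq_union_localizations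
    {K' : Type u} [Field K'] (V' : ValuationSubring K') (K : Subfield K')
    (himm : IsImmediateExtension V' K)
    (lam : Ordinal.{0}) (hlam : Order.IsSuccLimit lam) (v : Ordinal.{0} → K')
    (hvK : ∀ i < lam, v i ∈ K)
    (hpc : IsPseudoConvergent V' lam v)
    (halgseq : IsAlgebraicSeq V' (↑K) lam v)
    (x : K') (hxV' : x ∈ V') (hxlim : IsPseudoLimit V' lam v x)
    (hxalg : ∃ f : Polynomial K', f ≠ 0 ∧ CoeffsIn (↑(valRing V' K)) f ∧ f.eval x = 0)
    (hnoK : ∀ w ∈ K, ¬ IsPseudoLimit V' lam v w)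
    (h : Polynomial K') (hmonic : h.Monic) (hhK : CoeffsIn (↑K) h) (hhx : h.eval x = 0)
    (hminpoly : ∀ f : Polynomial K', f ≠ 0 → CoeffsIn (↑K) f → f.eval x = 0 →
      h.degree ≤ f.degree)
    (hhV : CoeffsIn (↑(valRing V' K)) h)
    (hEV : EvalValStrictMono V' lam v h)
    (hdegmin : ∀ f : Polynomial K', CoeffsIn (↑(valRing V' K)) f →
      EvalValStrictMono V' lam v f → h.degree ≤ f.degree) :
    (∀ z : K', (z ∈ V' ∧ z ∈ K.adjoinElt x) ↔
      ∃ i < lam, z ∈ locSet V' ((valRing V' K).adjoinElt ((x - v i) / (v (i + 1) - v i)))) ∧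
    (∀ i j : Ordinal, i ≤ j → j < lam →
      locSet V' ((valRing V' K).adjoinElt ((x - v i) / (v (i + 1) - v i))) ⊆
        locSet V' ((valRing V' K).adjoinElt ((x - v j) / (v (j + 1) - v j)))) :=
  valRing_adjoin_eq_union_localizations_general V' K lam hlam v hvK x hxlim h hmonic hhK hhx hdegmin
end

section
/- Let A be a ring, B a complete intersection A-algebra, and C a complete intersection B-algebra. Then C is a complete intersection A-algebra. Concretely: if B ≅ A[X₁,…,X_n]/(f₁,…,f_r) with (f₁,…,f_r) a regular sequence in A[X₁,…,X_n], and C ≅ B[Y₁,…,Y_m]/(g₁,…,g_s) with (g₁,…,g_s) a regular sequence in B[Y₁,…,Y_m], then C ≅ A[X₁,…,X_n,Y₁,…,Y_m]/(f₁,…,f_r,G₁,…,G_s) where each G_i ∈ A[X,Y] is a lift of g_i, and (f₁,…,f_r,G₁,…,G_s) is a regular sequence in A[X₁,…,X_n,Y₁,…,Y_m]. -/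
/-!
The composite `A[Y ⊕ X] ≃ A[X][Y] → B[Y]` is surjective with kernel `(f)`. Lifting the `g i`
along it gives `G`, and then `A[Y ⊕ X] ⧸ (f, G) ≃ B[Y] ⧸ (g) ≃ C`. The `f i` stay regular in the
flat extension `A[X][Y]` of `A[X]`, and modulo `(f)` the `G i` become the regular sequence `g`
of `B[Y]`.
-/

universe u v w

open MvPolynomial RingTheory.Sequence

namespace MvPolynomial

variable {R S σ τ : Type*} [CommRing R] [CommRing S]

theorem sumAlgEquiv_symm_C (p : MvPolynomial τ R) :
    (sumAlgEquiv R σ τ).symm (C p) = rename Sum.inr p :=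
  (AlgEquiv.symm_apply_eq _).mpr (AlgHom.congr_fun (sumAlgEquiv_comp_rename_inr R σ τ) p).symm

theorem ker_mapAlgHom_comp_sumAlgEquiv [Algebra R S] (π : MvPolynomial τ R →ₐ[R] S) :
    RingHom.ker ((mapAlgHom (σ := σ) π).comp (sumAlgEquiv R σ τ).toAlgHom) =
      (RingHom.ker π).map (rename (Sum.inr : τ → σ ⊕ τ)) := by
  let e := (sumAlgEquiv R σ τ).toRingEquiv
  have hrename : ((rename Sum.inr : MvPolynomial τ R →ₐ[R] MvPolynomial (σ ⊕ τ) R) :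
      MvPolynomial τ R →+* MvPolynomial (σ ⊕ τ) R) =
      (e.symm : MvPolynomial σ (MvPolynomial τ R) →+* MvPolynomial (σ ⊕ τ) R).comp C :=
    RingHom.ext fun p => (sumAlgEquiv_symm_C (σ := σ) p).symm
  rw [← AlgHom.comap_ker, ker_mapAlgHom, ← Ideal.map_coe (rename _), hrename, ← Ideal.map_map,
    Ideal.map_coe, Ideal.map_symm]
  rfl

end MvPolynomial

theorem Ideal.ofList_ofFn {R : Type*} [Semiring R] {n : ℕ} (F : Fin n → R) :
    Ideal.ofList (List.ofFn F) = Ideal.span (Set.range F) :=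
  congrArg Ideal.span (Set.ext fun _ => List.mem_ofFn)

theorem Ideal.ker_quotientMk_comp_of_surjective {R S ι : Type*} [CommRing R] [CommRing S]
    {φ : R →+* S} (hφ : Function.Surjective φ) {G : ι → R} {g : ι → S} (hG : ∀ i, φ (G i) = g i) :
    RingHom.ker ((Ideal.Quotient.mk (Ideal.span (Set.range g))).comp φ) =
      RingHom.ker φ ⊔ Ideal.span (Set.range G) := by
  obtain rfl : φ ∘ G = g := funext hG
  rw [← RingHom.comap_ker, Ideal.mk_ker, Set.range_comp, ← Ideal.map_span,
    Ideal.comap_map_of_surjective' φ hφ, sup_comm]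

namespace RingTheory.Sequence

theorem IsWeaklyRegular.map_ringEquiv {R S : Type*} [CommRing R] [CommRing S] (e : R ≃+* S)
    {rs : List R} (h : IsWeaklyRegular R rs) : IsWeaklyRegular S (rs.map e) :=
  have := RingHomInvPair.of_ringEquiv e
  have := RingHomInvPair.symm (e : R →+* S) e.symm
  (e.toSemilinearEquiv.isWeaklyRegular_congr' rs).mp h

theorem IsWeaklyRegular.map_rename_inr {R σ τ : Type*} [CommRing R]
    {rs : List (MvPolynomial τ R)} (h : IsWeaklyRegular (MvPolynomial τ R) rs) :
    IsWeaklyRegular (MvPolynomial (σ ⊕ τ) R) (rs.map (rename (Sum.inr : τ → σ ⊕ τ))) := by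
  have hrename : ⇑(rename (Sum.inr : τ → σ ⊕ τ) : MvPolynomial τ R →ₐ[R] _) =
      (sumAlgEquiv R σ τ).symm ∘ algebraMap _ (MvPolynomial σ (MvPolynomial τ R)) :=
    funext fun p => (sumAlgEquiv_symm_C p).symm
  rw [hrename, ← List.map_map]
  exact h.of_flat.map_ringEquiv (sumAlgEquiv R σ τ).symm.toRingEquiv

theorem isWeaklyRegular_append_iff_of_surjective {R S : Type*} [CommRing R] [CommRing S]
    {φ : R →+* S} (hφ : Function.Surjective φ) {rs : List R}
    (hker : Ideal.ofList rs = RingHom.ker φ) (ts : List R) :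
    IsWeaklyRegular R (rs ++ ts) ↔ IsWeaklyRegular R rs ∧ IsWeaklyRegular S (ts.map φ) := by
  have hsmul : (Ideal.ofList rs • ⊤ : Submodule R R) = RingHom.ker φ := by
    rw [Ideal.smul_eq_mul, Ideal.mul_top, hker]
  let ε : (R ⧸ (Ideal.ofList rs • ⊤ : Submodule R R)) ≃+ S :=
    (Submodule.quotEquivOfEq _ _ hsmul).toAddEquiv.trans
      (RingHom.quotientKerEquivOfSurjective hφ).toAddEquiv
  have hε : ∀ x, ε (Submodule.Quotient.mk x) = φ x := fun _ => rfl
  rw [isWeaklyRegular_append_iff]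
  refine and_congr_right' (ε.isWeaklyRegular_congr ?_)
  refine List.forall₂_map_right_iff.mpr <| List.forall₂_same.mpr fun t _ x => ?_
  obtain ⟨x, rfl⟩ := Submodule.Quotient.mk_surjective _ x
  rw [← Submodule.Quotient.mk_smul, hε, hε, smul_eq_mul, map_mul, smul_eq_mul]

end RingTheory.Sequence

/-- **Transitivity of complete intersections (Lemma 4 of the paper), explicit form.**
Let `A` be a ring, `B ≅ A[X₁,…,Xₙ]/(f₁,…,f_r)` with `(f₁,…,f_r)` a regular sequence in
`A[X₁,…,Xₙ]`, and `C ≅ B[Y₁,…,Y_m]/(g₁,…,g_s)` with `(g₁,…,g_s)` a regular sequence in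
`B[Y₁,…,Y_m]`.  Then there are lifts `G i ∈ A[X,Y]` of the `g i` along the natural map
`A[X,Y] → B[Y]` such that `(f₁,…,f_r,G₁,…,G_s)` is a regular sequence in `A[X,Y]` and
`C ≅ A[X,Y]/(f₁,…,f_r,G₁,…,G_s)`; in particular `C` is a complete intersection `A`-algebra.
(Here the variables `X` are indexed by `Sum.inr : Fin n → Fin m ⊕ Fin n` and the variables `Y`
by `Sum.inl`, a regular sequence means that each term is a nonzerodivisor modulo the previous
ones, i.e. a weakly regular sequence, and the natural map `A[X,Y] → B[Y]` is the composition of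
the isomorphism `A[X,Y] ≅ (A[X])[Y]` with the base-change `A[X] → A[X]/(f) ≅ B` of
coefficients.) -/
theorem completeIntersection_trans
    (A : Type u) (B : Type v) (C : Type w) [CommRing A] [CommRing B] [CommRing C]
    [Algebra A B] [Algebra B C] [Algebra A C] [IsScalarTower A B C]
    (n m r s : ℕ)
    (f : Fin r → MvPolynomial (Fin n) A)
    (hf : RingTheory.Sequence.IsWeaklyRegular (MvPolynomial (Fin n) A) (List.ofFn f))
    (eB : B ≃ₐ[A] MvPolynomial (Fin n) A ⧸ Ideal.span (Set.range f))
    (g : Fin s → MvPolynomial (Fin m) B)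
    (hg : RingTheory.Sequence.IsWeaklyRegular (MvPolynomial (Fin m) B) (List.ofFn g))
    (eC : C ≃ₐ[B] MvPolynomial (Fin m) B ⧸ Ideal.span (Set.range g)) :
    ∃ G : Fin s → MvPolynomial (Fin m ⊕ Fin n) A,
      (∀ i, MvPolynomial.map
          ((eB.symm.toAlgHom.toRingHom).comp (Ideal.Quotient.mk (Ideal.span (Set.range f))))
          ((MvPolynomial.sumAlgEquiv A (Fin m) (Fin n)) (G i)) = g i) ∧
      RingTheory.Sequence.IsWeaklyRegular (MvPolynomial (Fin m ⊕ Fin n) A)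
        ((List.ofFn fun i =>
            MvPolynomial.rename (Sum.inr : Fin n → Fin m ⊕ Fin n) (f i)) ++ List.ofFn G) ∧
      Nonempty (C ≃ₐ[A] MvPolynomial (Fin m ⊕ Fin n) A ⧸
        Ideal.span
          (Set.range (fun i =>
            MvPolynomial.rename (Sum.inr : Fin n → Fin m ⊕ Fin n) (f i)) ∪ Set.range G)) := by
  set F := fun i => rename (Sum.inr : Fin n → Fin m ⊕ Fin n) (f i)
  let π : MvPolynomial (Fin n) A →ₐ[A] B :=
    eB.symm.toAlgHom.comp (Ideal.Quotient.mkₐ A (Ideal.span (Set.range f)))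
  let φ : MvPolynomial (Fin m ⊕ Fin n) A →ₐ[A] MvPolynomial (Fin m) B :=
    (mapAlgHom π).comp (sumAlgEquiv A (Fin m) (Fin n)).toAlgHom
  have hφ : Function.Surjective φ :=
    (map_surjective _ (eB.symm.surjective.comp Ideal.Quotient.mk_surjective)).comp
      (sumAlgEquiv _ _ _).surjective
  have hkerπ : RingHom.ker π = Ideal.span (Set.range f) :=
    (RingHom.ker_equiv_comp _ eB.symm.toRingEquiv).trans Ideal.mk_ker
  have hkerφ : RingHom.ker φ = Ideal.span (Set.range F) := by
    rw [ker_mapAlgHom_comp_sumAlgEquiv, hkerπ, Ideal.map_span, ← Set.range_comp]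
    rfl
  choose G hG using fun i => hφ (g i)
  refine ⟨G, hG, ?_, ?_⟩
  · rw [isWeaklyRegular_append_iff_of_surjective (φ := φ.toRingHom) hφ
      ((Ideal.ofList_ofFn F).trans hkerφ.symm), List.map_ofFn]
    refine ⟨?_, ?_⟩
    · have := hf.map_rename_inr (σ := Fin m)
      rwa [List.map_ofFn] at this
    · rwa [← funext hG] at hg
  · let Φ := (Ideal.Quotient.mkₐ A (Ideal.span (Set.range g))).comp φ
    have hΦ : Function.Surjective Φ := Ideal.Quotient.mk_surjective.comp hφ
    have hkerΦ : RingHom.ker Φ = Ideal.span (Set.range F ∪ Set.range G) := by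
      rw [Ideal.span_union, ← hkerφ]
      exact Ideal.ker_quotientMk_comp_of_surjective (φ := φ.toRingHom) hφ hG
    exact ⟨(eC.restrictScalars A).trans ((Ideal.quotientKerAlgEquivOfSurjective hΦ).symm.trans
      (Ideal.quotientEquivAlgOfEq A hkerΦ))⟩
end

section
/- Let V ⊆ V' be an immediate extension of valuation rings with fraction field extension K ⊆ K', let (v_j)_{j<λ} be an algebraic pseudo convergent sequence in V having a pseudo limit x ∈ V' but no pseudo limit in K, and let h ∈ V[Y] have minimal degree among the polynomials f ∈ V[Y] with val(f(v_i)) < val(f(v_j)) for all large i < j < λ. Then deg h > 1. -/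
universe u

open Polynomial

/-!
A polynomial whose values along the sequence have eventually increasing valuation cannot be
constant, and a polynomial of degree one is, up to a nonzero constant factor, `Y - w` with
`w ∈ K`. Increasing values of `val (v j - w)` force `val (v j - w) = val (v j - v k)` for all large
`j < k`, and pseudo convergence then turns `w` into a pseudo limit of the sequence in `K`.
-/

variable {K' : Type u} [Field K'] {V' : ValuationSubring K'} {lam : Ordinal.{0}}
  {v : Ordinal.{0} → K'}

theorem IsPseudoConvergent.valuation_sub_eq (hpc : IsPseudoConvergent V' lam v)
    {p q q' : Ordinal} (hpq : p < q) (hqq' : q < q') (hq' : q' < lam) :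
    V'.valuation (v p - v q) = V'.valuation (v p - v q') := by
  rw [show v p - v q = (v p - v q') - (v q - v q') by ring,
    Valuation.map_sub_eq_of_lt_left _ (hpc p q q' hpq hqq' hq')]

theorem IsPseudoConvergent.valuation_sub_lt (hpc : IsPseudoConvergent V' lam v)
    {p q q' : Ordinal} (hpq : p < q) (hqq' : q < q') (hq' : q' < lam) :
    V'.valuation (v q - v q') < V'.valuation (v p - v q) :=
  hpc.valuation_sub_eq hpq hqq' hq' ▸ hpc p q q' hpq hqq' hq'

theorem EvalValStrictMono.of_C_mul {a : K'} {f : K'[X]}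
    (hf : EvalValStrictMono V' lam v (C a * f)) : EvalValStrictMono V' lam v f := by
  obtain ⟨i₀, hi₀, hmono⟩ := hf
  refine ⟨i₀, hi₀, fun i j hi hij hj => ?_⟩
  have := hmono i j hi hij hj
  simp only [ValuationSubring.ValLT, eval_mul, eval_C, Valuation.map_mul] at this
  exact lt_of_mul_lt_mul_left this zero_le

theorem EvalValStrictMono.natDegree_ne_zero (hlam : Order.IsSuccLimit lam) {f : K'[X]}
    (hf : EvalValStrictMono V' lam v f) : f.natDegree ≠ 0 := by
  intro hdeg
  obtain ⟨i₀, hi₀, hmono⟩ := hf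
  have := hmono i₀ (Order.succ i₀) le_rfl (Order.lt_succ i₀) (hlam.succ_lt hi₀)
  rw [eq_C_of_natDegree_eq_zero hdeg] at this
  simp [ValuationSubring.ValLT] at this

theorem exists_mem_eq_C_mul_X_sub_C_of_natDegree_eq_one {K : Subfield K'} {f : K'[X]}
    (hK : CoeffsIn (K : Set K') f) (hdeg : f.natDegree = 1) :
    ∃ w ∈ K, f = C (f.coeff 1) * (X - C w) := by
  have ha : f.coeff 1 ≠ 0 := by
    rw [← hdeg]
    exact leadingCoeff_ne_zero.mpr (ne_zero_of_natDegree_gt (hdeg ▸ one_pos))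
  refine ⟨-f.coeff 0 / f.coeff 1, K.div_mem (K.neg_mem (hK 0)) (hK 1), ?_⟩
  conv_lhs => rw [eq_X_add_C_of_natDegree_le_one hdeg.le]
  rw [mul_sub, ← C_mul, mul_div_cancel₀ _ ha, C_neg]
  ring

theorem IsPseudoConvergent.isPseudoLimit_of_evalValStrictMono_X_sub_C
    (hlam : Order.IsSuccLimit lam) (hpc : IsPseudoConvergent V' lam v) {w : K'}
    (hw : EvalValStrictMono V' lam v (X - C w)) : IsPseudoLimit V' lam v w := by
  obtain ⟨i₀, hi₀, hmono⟩ := hw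
  simp only [ValuationSubring.ValLT, eval_sub, eval_X, eval_C] at hmono
  -- Past `i₀`, `w` is as close to `v j` as any later term, hence closer than any earlier one.
  have dist_eq : ∀ j k, i₀ ≤ j → j < k → k < lam →
      V'.valuation (v j - w) = V'.valuation (v j - v k) := fun j k hj hjk hk => by
    rw [show v j - v k = (v j - w) - (v k - w) by ring,
      Valuation.map_sub_eq_of_lt_left _ (hmono j k hj hjk hk)]
  have dist_eq_of_lt : ∀ p j, p < j → i₀ ≤ j → Order.succ j < lam →
      V'.valuation (v p - w) = V'.valuation (v p - v j) := fun p j hpj hj hj' => by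
    have hlt : V'.valuation (v j - w) < V'.valuation (v p - v j) :=
      dist_eq j _ hj (Order.lt_succ j) hj' ▸ hpc.valuation_sub_lt hpj (Order.lt_succ j) hj'
    rw [show v p - w = (v p - v j) + (v j - w) by ring, Valuation.map_add_eq_of_lt_left _ hlt]
  intro i i' hii' hi'
  set j := Order.succ (max i₀ i')
  have hj : j < lam := hlam.succ_lt (max_lt hi₀ hi')
  have hi'j : i' < j := (le_max_right _ _).trans_lt (Order.lt_succ _)
  have hi₀j : i₀ ≤ j := ((le_max_left _ _).trans_lt (Order.lt_succ _)).le
  simp only [ValuationSubring.ValLT]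
  rw [Valuation.map_sub_swap, Valuation.map_sub_swap _ w,
    dist_eq_of_lt i j (hii'.trans hi'j) hi₀j (hlam.succ_lt hj),
    dist_eq_of_lt i' j hi'j hi₀j (hlam.succ_lt hj)]
  exact hpc i i' j hii' hi'j hj

theorem one_lt_natDegree_of_minimal_general
    {K' : Type u} [Field K'] (V' : ValuationSubring K') (K : Subfield K')
    (lam : Ordinal.{0}) (hlam : Order.IsSuccLimit lam) (v : Ordinal.{0} → K')
    (hpc : IsPseudoConvergent V' lam v)
    (hnoK : ∀ w ∈ K, ¬ IsPseudoLimit V' lam v w)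
    (h : Polynomial K') (hhV : CoeffsIn (↑(valRing V' K)) h)
    (hEV : EvalValStrictMono V' lam v h) :
    1 < h.natDegree := by
  have hdeg₀ : h.natDegree ≠ 0 := hEV.natDegree_ne_zero hlam
  have hdeg₁ : h.natDegree ≠ 1 := by
    intro hdeg
    obtain ⟨w, hwK, hw⟩ :=
      exists_mem_eq_C_mul_X_sub_C_of_natDegree_eq_one (fun n => (hhV n).2) hdeg
    rw [hw] at hEV
    exact hnoK w hwK (hpc.isPseudoLimit_of_evalValStrictMono_X_sub_C hlam hEV.of_C_mul)
  omega

/-- **Observation in the proof of Lemma 6.** Let `V ⊆ V'` be an immediate extension of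
valuation rings (`V = V' ∩ K`), `(v j)_{j<lam}` an algebraic pseudo convergent sequence in `V`
with a pseudo limit `x ∈ V'` but no pseudo limit in `K`, and let `h ∈ V[Y]` have minimal degree
among the polynomials `f ∈ V[Y]` with `val (f (v i)) < val (f (v j))` for all large
`i < j < lam`. Then `deg h > 1`. -/
theorem one_lt_natDegree_of_minimal
    {K' : Type u} [Field K'] (V' : ValuationSubring K') (K : Subfield K')
    (himm : IsImmediateExtension V' K)
    (lam : Ordinal.{0}) (hlam : Order.IsSuccLimit lam) (v : Ordinal.{0} → K')
    (hvV : ∀ j < lam, v j ∈ valRing V' K)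
    (hpc : IsPseudoConvergent V' lam v)
    (halgseq : IsAlgebraicSeq V' (↑(valRing V' K)) lam v)
    (x : K') (hxV' : x ∈ V') (hxlim : IsPseudoLimit V' lam v x)
    (hnoK : ∀ w ∈ K, ¬ IsPseudoLimit V' lam v w)
    (h : Polynomial K') (hhV : CoeffsIn (↑(valRing V' K)) h)
    (hEV : EvalValStrictMono V' lam v h)
    (hdegmin : ∀ f : Polynomial K', CoeffsIn (↑(valRing V' K)) f →
      EvalValStrictMono V' lam v f → h.degree ≤ f.degree) :
    1 < h.natDegree :=
  one_lt_natDegree_of_minimal_general V' K lam hlam v hpc hnoK h hhV hEV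
end
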